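/- Let B be an n×m complex matrix with columns x_1,...,x_m and rows w_1,...,w_n, and let k ≥ 1. Then the columns attain the Welch bound for k with equality, i.e., binom(n+k-1,k) · Σ_{i,j} |⟨x_i,x_j⟩|^{2k} = (Σ_i ⟨x_i,x_i⟩^k)^2, if and only if the vectors √(multinomial(k; k_1,...,k_n)) · w_1^{(k_1)} ∘ ··· ∘ w_n^{(k_n)}, ranging over all tuples (k_1,...,k_n) of nonnegative integers with k_1+···+k_n = k, all have equal length and are pairwise orthogonal. -/

import Mathlib

/-!
Let `v(x) = (√multinomial(k; p) · x^p)_p`, indexed by the exponent vectors `p` with `|p| = k`;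
by the multinomial theorem `⟪v x, v y⟫ = ⟪x, y⟫ ^ k`. Let `Y` be the matrix with columns
`v(x_j)`; its rows are the vectors `W p`. Then `∑ |⟪x_i, x_j⟫| ^ 2k = ‖YᴴY‖_F² = ‖YYᴴ‖_F² =
∑ |⟪W p, W q⟫|²` and `∑ ‖x_j‖ ^ 2k = tr YᴴY = ∑ ‖W p‖²`. With `N = binom(n+k-1, k)` rows,
`N ∑_{p,q} |⟪W p, W q⟫|² ≥ N ∑_p ‖W p‖⁴ ≥ (∑_p ‖W p‖²)²` by Cauchy–Schwarz; equality holds in the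
first step iff the `W p` are pairwise orthogonal, and in the second iff they have equal norms.
-/

open Finset ComplexConjugate

section CauchySchwarz

variable {ι : Type*} (s : Finset ι) (d : ι → ℝ)

theorem two_mul_card_mul_sum_sq_sub_sq_sum :
    2 * (#s * ∑ i ∈ s, d i ^ 2 - (∑ i ∈ s, d i) ^ 2) = ∑ i ∈ s, ∑ j ∈ s, (d i - d j) ^ 2 := by
  simp only [sub_sq, sum_add_distrib, sum_sub_distrib, sum_const, nsmul_eq_mul, ← mul_sum,
    ← sum_mul, mul_assoc]
  ring

theorem sq_sum_eq_card_mul_sum_sq_iff :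
    (∑ i ∈ s, d i) ^ 2 = #s * ∑ i ∈ s, d i ^ 2 ↔ ∀ i ∈ s, ∀ j ∈ s, d i = d j := by
  calc (∑ i ∈ s, d i) ^ 2 = #s * ∑ i ∈ s, d i ^ 2
        ↔ ∑ i ∈ s, ∑ j ∈ s, (d i - d j) ^ 2 = 0 := by
          rw [← two_mul_card_mul_sum_sq_sub_sq_sum]
          constructor <;> intro h <;> linarith
    _ ↔ _ := by
          simp_rw [sum_eq_zero_iff_of_nonneg (fun _ _ => sum_nonneg fun _ _ => sq_nonneg _),
            sum_eq_zero_iff_of_nonneg (fun _ _ => sq_nonneg _), sq_eq_zero_iff, sub_eq_zero]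

theorem card_mul_sum_sum_eq_sq_sum_iff {g : ι → ι → ℝ} (hg : ∀ i ∈ s, ∀ j ∈ s, 0 ≤ g i j)
    (hdiag : ∀ i ∈ s, g i i = d i ^ 2) :
    #s * ∑ i ∈ s, ∑ j ∈ s, g i j = (∑ i ∈ s, d i) ^ 2 ↔
      (∀ i ∈ s, ∀ j ∈ s, d i = d j) ∧ ∀ i ∈ s, ∀ j ∈ s, i ≠ j → g i j = 0 := by
  classical
  rcases s.eq_empty_or_nonempty with rfl | hs
  · simp
  set off := ∑ i ∈ s, ∑ j ∈ s.erase i, g i j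
  have hsplit : ∑ i ∈ s, ∑ j ∈ s, g i j = ∑ i ∈ s, d i ^ 2 + off := by
    rw [← sum_add_distrib]
    exact sum_congr rfl fun i hi => by rw [← hdiag i hi, add_sum_erase _ _ hi]
  have hoff : off = 0 ↔ ∀ i ∈ s, ∀ j ∈ s, i ≠ j → g i j = 0 := by
    rw [sum_eq_zero_iff_of_nonneg fun i hi => sum_nonneg fun j hj =>
      hg i hi j (mem_of_mem_erase hj)]
    refine forall₂_congr fun i hi => ?_
    rw [sum_eq_zero_iff_of_nonneg fun j hj => hg i hi j (mem_of_mem_erase hj)]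
    simp only [mem_erase, ne_comm, and_imp]
    exact forall_congr' fun j => imp.swap
  have hcard : (0 : ℝ) < #s := by exact_mod_cast hs.card_pos
  have hoff_nonneg : 0 ≤ off := sum_nonneg fun i hi => sum_nonneg fun j hj =>
    hg i hi j (mem_of_mem_erase hj)
  have hcs := sq_sum_le_card_mul_sum_sq (s := s) (f := d)
  rw [← sq_sum_eq_card_mul_sum_sq_iff, ← hoff, hsplit]
  constructor
  · intro h
    have h0 : off = 0 := by nlinarith
    rw [h0, add_zero] at h
    exact ⟨h.symm, h0⟩
  · rintro ⟨h, h0⟩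
    rw [h0, add_zero, h]

end CauchySchwarz

theorem card_piAntidiag_univ {ι : Type*} [Fintype ι] [DecidableEq ι] (k : ℕ) :
    #(piAntidiag (univ : Finset ι) k) = (Fintype.card ι + k - 1).choose k := by
  rw [← map_sym_eq_piAntidiag, card_map, ← Sym.card_sym_eq_choose, ← card_univ]
  congr
  ext; simp

section RCLike

variable {𝕜 : Type*} [RCLike 𝕜]

theorem card_mul_sum_norm_inner_sq_eq_sq_sum_norm_sq_iff {E κ : Type*} [NormedAddCommGroup E]
    [InnerProductSpace 𝕜 E] (S : Finset κ) (v : κ → E) :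
    #S * ∑ p ∈ S, ∑ q ∈ S, ‖inner 𝕜 (v p) (v q)‖ ^ 2 = (∑ p ∈ S, ‖v p‖ ^ 2) ^ 2 ↔
      (∀ p ∈ S, ∀ q ∈ S, ‖v p‖ = ‖v q‖) ∧ ∀ p ∈ S, ∀ q ∈ S, p ≠ q → inner 𝕜 (v p) (v q) = 0 := by
  rw [card_mul_sum_sum_eq_sq_sum_iff S _ (fun _ _ _ _ => by positivity) fun p _ => by
    rw [inner_self_eq_norm_sq_to_K, norm_pow, RCLike.norm_ofReal, abs_norm]]
  simp only [pow_left_inj₀ (norm_nonneg _) (norm_nonneg _) two_ne_zero, sq_eq_zero_iff,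
    norm_eq_zero]

theorem sum_norm_sq_columnGram_eq_sum_norm_sq_rowGram {ι κ : Type*} (s : Finset ι) (S : Finset κ)
    (Y : κ → ι → 𝕜) :
    ∑ i ∈ s, ∑ j ∈ s, ‖∑ p ∈ S, conj (Y p i) * Y p j‖ ^ 2 =
      ∑ p ∈ S, ∑ q ∈ S, ‖∑ i ∈ s, conj (Y p i) * Y q i‖ ^ 2 := by
  apply RCLike.ofReal_injective (K := 𝕜)
  simp only [RCLike.ofReal_pow, ← RCLike.conj_mul, map_sum, map_mul,
    RCLike.conj_conj, sum_mul_sum, sum_comm (s := s) (t := S)]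
  refine sum_congr rfl fun p _ => sum_congr rfl fun q _ => sum_congr rfl fun i _ =>
    sum_congr rfl fun j _ => by ring

variable {ι : Type*} [Fintype ι]

/-- `veronese (B · j) kv` is the `j`-th entry of the statement's vector `W kv`. -/
noncomputable def veronese (x : ι → 𝕜) (p : ι → ℕ) : 𝕜 :=
  (√(Nat.multinomial univ p) : 𝕜) * ∏ i, x i ^ p i

theorem sum_conj_mul_pow_eq_sum_conj_veronese_mul [DecidableEq ι] (x y : ι → 𝕜) (k : ℕ) :
    (∑ i, conj (x i) * y i) ^ k = ∑ p ∈ piAntidiag univ k, conj (veronese x p) * veronese y p := by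
  rw [sum_pow_eq_sum_piAntidiag]
  refine sum_congr rfl fun p _ => ?_
  have hsqrt : (√(Nat.multinomial univ p) : 𝕜) * √(Nat.multinomial univ p) =
      Nat.multinomial univ p := by
    rw [← RCLike.ofReal_mul, Real.mul_self_sqrt (Nat.cast_nonneg _), RCLike.ofReal_natCast]
  simp only [veronese, map_mul, map_prod, map_pow, RCLike.conj_ofReal, mul_pow, prod_mul_distrib]
  rw [mul_mul_mul_comm, hsqrt]

theorem sum_norm_sq_pow_eq_sum_norm_veronese_sq [DecidableEq ι] (x : ι → 𝕜) (k : ℕ) :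
    (∑ i, ‖x i‖ ^ 2) ^ k = ∑ p ∈ piAntidiag univ k, ‖veronese x p‖ ^ 2 := by
  apply RCLike.ofReal_injective (K := 𝕜)
  push_cast
  simp only [← RCLike.conj_mul]
  exact sum_conj_mul_pow_eq_sum_conj_veronese_mul x x k

end RCLike

theorem welch_equality_criterion_general (n m k : ℕ)
    (B : Matrix (Fin n) (Fin m) ℂ) :
    -- columns and Schur-product row vectors
    (let x : Fin m → EuclideanSpace ℂ (Fin n) := fun j => WithLp.toLp 2 (fun i => B i j);
     let W : (Fin n → ℕ) → EuclideanSpace ℂ (Fin m) := fun kv =>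
       WithLp.toLp 2 (fun j => (Real.sqrt (Nat.multinomial Finset.univ kv) : ℂ) *
         ∏ i, (B i j) ^ (kv i));
     (((n + k - 1).choose k : ℝ) *
         ∑ i, ∑ j, ‖(inner ℂ (x i) (x j) : ℂ)‖ ^ (2 * k) =
       (∑ j, ‖x j‖ ^ (2 * k)) ^ 2) ↔
     ((∀ kv kv' : Fin n → ℕ, ∑ i, kv i = k → ∑ i, kv' i = k →
         ‖W kv‖ = ‖W kv'‖) ∧
      (∀ kv kv' : Fin n → ℕ, ∑ i, kv i = k → ∑ i, kv' i = k → kv ≠ kv' →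
         (inner ℂ (W kv) (W kv') : ℂ) = 0))) := by
  intro x W
  set S := piAntidiag (univ : Finset (Fin n)) k
  have hframe : ∑ i, ∑ j, ‖inner ℂ (x i) (x j)‖ ^ (2 * k) =
      ∑ p ∈ S, ∑ q ∈ S, ‖inner ℂ (W p) (W q)‖ ^ 2 := by
    have hnorm (z : ℂ) : ‖z‖ ^ (2 * k) = ‖z ^ k‖ ^ 2 := by rw [norm_pow, ← pow_mul, mul_comm]
    simp_rw [hnorm, PiLp.inner_apply, RCLike.inner_apply',
      sum_conj_mul_pow_eq_sum_conj_veronese_mul]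
    exact sum_norm_sq_columnGram_eq_sum_norm_sq_rowGram univ S fun p j => W p j
  have htrace : ∑ j, ‖x j‖ ^ (2 * k) = ∑ p ∈ S, ‖W p‖ ^ 2 := by
    simp_rw [pow_mul, EuclideanSpace.norm_sq_eq, sum_norm_sq_pow_eq_sum_norm_veronese_sq]
    exact sum_comm
  rw [hframe, htrace, show (n + k - 1).choose k = #S by simp [S, card_piAntidiag_univ],
    card_mul_sum_norm_inner_sq_eq_sq_sum_norm_sq_iff]
  simp only [S, mem_piAntidiag, mem_univ, implies_true, and_true]
  grind

theorem welch_equality_criterion (n m k : ℕ) (hk : 1 ≤ k)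
    (B : Matrix (Fin n) (Fin m) ℂ) :
    -- columns and Schur-product row vectors
    (let x : Fin m → EuclideanSpace ℂ (Fin n) := fun j => WithLp.toLp 2 (fun i => B i j);
     let W : (Fin n → ℕ) → EuclideanSpace ℂ (Fin m) := fun kv =>
       WithLp.toLp 2 (fun j => (Real.sqrt (Nat.multinomial Finset.univ kv) : ℂ) *
         ∏ i, (B i j) ^ (kv i));
     (((n + k - 1).choose k : ℝ) *
         ∑ i, ∑ j, ‖(inner ℂ (x i) (x j) : ℂ)‖ ^ (2 * k) =
       (∑ j, ‖x j‖ ^ (2 * k)) ^ 2) ↔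
     ((∀ kv kv' : Fin n → ℕ, ∑ i, kv i = k → ∑ i, kv' i = k →
         ‖W kv‖ = ‖W kv'‖) ∧
      (∀ kv kv' : Fin n → ℕ, ∑ i, kv i = k → ∑ i, kv' i = k → kv ≠ kv' →
         (inner ℂ (W kv) (W kv') : ℂ) = 0))) :=
  welch_equality_criterion_general n m k B
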